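/- The series ∑_{p prime} (log p)·(2p² − p + 1)/(p(p+1)³) converges and equals 1/4 + log 2 + ∫_1^∞ E(t)·(4t³ − 5t² + 4t + 1)/(t²(t+1)⁴) dt, where the integral converges absolutely. -/

import Mathlib

open Real MeasureTheory

/-- Chebyshev theta function: `θ(t) = ∑_{p ≤ t, p prime} log p`. -/
noncomputable def chebTheta (t : ℝ) : ℝ :=
  ∑ p ∈ (Finset.range (Nat.floor t + 1)).filter Nat.Prime, Real.log p

/-- Error term in the Prime Number Theorem: `E(t) = θ(t) − t`. -/
noncomputable def chebE (t : ℝ) : ℝ := chebTheta t - t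

open Filter Set


noncomputable def st15W (t : ℝ) : ℝ := (4*t^3 - 5*t^2 + 4*t + 1) / (t^2 * (t+1)^4)
noncomputable def st15f (t : ℝ) : ℝ := (2*t^2 - t + 1) / (t * (t+1)^3)

lemma st15W_nonneg {t : ℝ} (ht : 0 ≤ t) : 0 ≤ st15W t := by
  unfold st15W
  apply div_nonneg
  · nlinarith [mul_nonneg ht (sq_nonneg (8*t-5))]
  · positivity

lemma st15f_deriv {t : ℝ} (ht : 0 < t) : HasDerivAt (fun s => -(st15f s)) (st15W t) t := by
  have ht1 : (0:ℝ) < t + 1 := by linarith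
  have hu : HasDerivAt (fun s : ℝ => 2*s^2 - s + 1) (4*t - 1) t := by
    have := (((hasDerivAt_pow 2 t).const_mul 2).sub (hasDerivAt_id t)).add_const 1
    exact this.congr_deriv (by ring)
  have hv : HasDerivAt (fun s : ℝ => s * (s+1)^3) ((t+1)^3 + t * (3*(t+1)^2)) t := by
    have h1 : HasDerivAt (fun s : ℝ => (s+1)^3) (3*(t+1)^2) t := by
      have := (hasDerivAt_pow 3 (t+1)).comp t ((hasDerivAt_id t).add_const 1)
      exact this.congr_deriv (by ring)
    have := (hasDerivAt_id t).mul h1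
    exact this.congr_deriv (by simp only [id_eq]; ring)
  have hvne : t * (t+1)^3 ≠ 0 := by positivity
  have := (hu.div hv hvne).neg
  refine this.congr_deriv ?_
  unfold st15W
  have h0 : t ≠ 0 := ne_of_gt ht
  have h1 : t + 1 ≠ 0 := ne_of_gt ht1
  field_simp
  ring

lemma st15f_tendsto : Tendsto st15f atTop (nhds 0) := by
  apply squeeze_zero' (g := fun t => 4 / t^2)
  · filter_upwards [eventually_ge_atTop (1:ℝ)] with t ht
    unfold st15f
    apply div_nonneg
    · nlinarith
    · positivity
  · filter_upwards [eventually_ge_atTop (1:ℝ)] with t ht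
    unfold st15f
    rw [div_le_div_iff₀ (by positivity) (by positivity)]
    nlinarith [sq_nonneg t, sq_nonneg (t-1)]
  · exact Tendsto.div_atTop tendsto_const_nhds (tendsto_pow_atTop two_ne_zero)

lemma st15_int_W {a : ℝ} (ha : 1 ≤ a) :
    IntegrableOn st15W (Set.Ioi a) ∧ ∫ t in Set.Ioi a, st15W t = st15f a := by
  have hd : ∀ x ∈ Set.Ici a, HasDerivAt (fun s => -(st15f s)) (st15W x) x :=
    fun x hx => st15f_deriv (lt_of_lt_of_le one_pos (le_trans ha hx))
  have hpos : ∀ x ∈ Set.Ioi a, 0 ≤ st15W x := fun x hx => st15W_nonneg (by have := lt_of_le_of_lt ha hx; linarith)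
  have hlim : Tendsto (fun s => -(st15f s)) atTop (nhds 0) := by
    simpa using st15f_tendsto.neg
  refine ⟨integrableOn_Ioi_deriv_of_nonneg' hd hpos hlim, ?_⟩
  rw [integral_Ioi_of_hasDerivAt_of_nonneg' hd hpos hlim]
  simp

noncomputable def st15G (t : ℝ) : ℝ :=
  Real.log t - Real.log (t+1) - 3/(t+1) + 7/(t+1)^2 - 4/(t+1)^3

lemma st15G_deriv {t : ℝ} (ht : 0 < t) : HasDerivAt st15G (t * st15W t) t := by
  have ht1 : (0:ℝ) < t + 1 := by linarith
  have h0 : t ≠ 0 := ne_of_gt ht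
  have h1 : t + 1 ≠ 0 := ne_of_gt ht1
  have hid : HasDerivAt (fun s : ℝ => s + 1) 1 t := (hasDerivAt_id t).add_const 1
  have hlog1 : HasDerivAt (fun s : ℝ => Real.log s) t⁻¹ t := Real.hasDerivAt_log h0
  have hlog2 : HasDerivAt (fun s : ℝ => Real.log (s+1)) (t+1)⁻¹ t := by
    exact ((Real.hasDerivAt_log h1).comp t hid).congr_deriv (mul_one _)
  have hp2 : HasDerivAt (fun s : ℝ => (s+1)^2) (2*(t+1)) t := by
    have := (hasDerivAt_pow 2 (t+1)).comp t hid
    exact this.congr_deriv (by push_cast; ring)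
  have hp3 : HasDerivAt (fun s : ℝ => (s+1)^3) (3*(t+1)^2) t := by
    have := (hasDerivAt_pow 3 (t+1)).comp t hid
    exact this.congr_deriv (by push_cast; ring)
  have h3 := (hasDerivAt_const t (3:ℝ)).div hid h1
  have h7 := (hasDerivAt_const t (7:ℝ)).div hp2 (pow_ne_zero 2 h1)
  have h4 := (hasDerivAt_const t (4:ℝ)).div hp3 (pow_ne_zero 3 h1)
  have := ((((hlog1.sub hlog2).sub h3).add h7).sub h4)
  refine this.congr_deriv ?_
  unfold st15W
  field_simp
  ring

lemma st15G_tendsto : Tendsto st15G atTop (nhds 0) := by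
  have h1 : Tendsto (fun t : ℝ => Real.log t - Real.log (t+1)) atTop (nhds 0) := by
    have hq : Tendsto (fun t : ℝ => t / (t+1)) atTop (nhds 1) := by
      have := Filter.Tendsto.div_atTop (f := fun t:ℝ => (1:ℝ)) tendsto_const_nhds
        (tendsto_atTop_add_const_right atTop 1 tendsto_id)
      have h2 : Tendsto (fun t : ℝ => 1 - 1/(t+1)) atTop (nhds (1 - 0)) :=
        tendsto_const_nhds.sub (by simpa [one_div] using this)
      rw [sub_zero] at h2
      apply h2.congr'
      filter_upwards [eventually_gt_atTop (0:ℝ)] with t ht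
      field_simp
      ring
    have := (Real.continuousAt_log one_ne_zero).tendsto.comp hq
    rw [Real.log_one] at this
    apply this.congr'
    filter_upwards [eventually_gt_atTop (0:ℝ)] with t ht
    simp only [Function.comp]
    rw [Real.log_div (ne_of_gt ht) (by positivity)]
  have inv_tendsto : ∀ n : ℕ, n ≠ 0 → ∀ c : ℝ, Tendsto (fun t : ℝ => c/(t+1)^n) atTop (nhds 0) := by
    intro n hn c
    apply Filter.Tendsto.div_atTop tendsto_const_nhds
    exact (tendsto_pow_atTop hn).comp (tendsto_atTop_add_const_right atTop 1 tendsto_id)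
  have h3 := inv_tendsto 1 one_ne_zero 3
  have h7 := inv_tendsto 2 two_ne_zero 7
  have h4 := inv_tendsto 3 three_ne_zero 4
  have := (((h1.sub (by simpa using h3)).add h7).sub h4)
  unfold st15G; simpa using this

lemma st15_int_tW :
    IntegrableOn (fun t => t * st15W t) (Set.Ioi 1) ∧
    ∫ t in Set.Ioi (1:ℝ), t * st15W t = 1/4 + Real.log 2 := by
  have hd : ∀ x ∈ Set.Ici (1:ℝ), HasDerivAt st15G (x * st15W x) x :=
    fun x hx => st15G_deriv (lt_of_lt_of_le one_pos hx)
  have hpos : ∀ x ∈ Set.Ioi (1:ℝ), 0 ≤ x * st15W x := by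
    intro x hx
    have hx1 : (1:ℝ) ≤ x := le_of_lt hx
    have h : (0:ℝ) ≤ x - 1 := by linarith
    exact mul_nonneg (by linarith) (st15W_nonneg (by linarith))
  refine ⟨integrableOn_Ioi_deriv_of_nonneg' hd hpos st15G_tendsto, ?_⟩
  rw [integral_Ioi_of_hasDerivAt_of_nonneg' hd hpos st15G_tendsto]
  unfold st15G
  rw [Real.log_one]
  norm_num
  ring


noncomputable def st15c (n : ℕ) : ℝ := if n.Prime then Real.log n else 0

lemma st15c_nonneg (n : ℕ) : 0 ≤ st15c n := by
  unfold st15c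
  split
  · rename_i h
    exact Real.log_nonneg (by exact_mod_cast h.one_lt.le)
  · exact le_refl 0

lemma chebTheta_eq (t : ℝ) :
    chebTheta t = ∑ n ∈ Finset.range (Nat.floor t + 1), st15c n := by
  rw [chebTheta, Finset.sum_filter]
  simp [st15c]

lemma chebTheta_nonneg (t : ℝ) : 0 ≤ chebTheta t := by
  rw [chebTheta_eq]
  exact Finset.sum_nonneg fun n _ => st15c_nonneg n

lemma chebTheta_le {t : ℝ} (ht : 0 ≤ t) : chebTheta t ≤ Real.log 4 * t := by
  have h1 : chebTheta t = Real.log ((primorial (Nat.floor t) : ℕ) : ℝ) := by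
    rw [chebTheta, primorial]
    push_cast
    rw [Real.log_prod]
    intro p hp
    have := (Finset.mem_filter.mp hp).2
    exact_mod_cast this.pos.ne'
  rw [h1]
  calc Real.log ((primorial (Nat.floor t) : ℕ) : ℝ)
      ≤ Real.log ((4:ℝ) ^ (Nat.floor t)) := by
        apply Real.log_le_log (by exact_mod_cast (primorial_pos (Nat.floor t)))
        exact_mod_cast primorial_le_4_pow (Nat.floor t)
    _ = (Nat.floor t : ℝ) * Real.log 4 := by rw [Real.log_pow]
    _ ≤ t * Real.log 4 := by
        apply mul_le_mul_of_nonneg_right (Nat.floor_le ht)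
        apply Real.log_nonneg; norm_num
    _ = Real.log 4 * t := mul_comm _ _

lemma chebTheta_measurable : Measurable chebTheta := by
  have : chebTheta = (fun n : ℕ => ∑ p ∈ (Finset.range (n + 1)).filter Nat.Prime, Real.log p)
      ∘ Nat.floor := rfl
  rw [this]
  exact measurable_from_top.comp Nat.measurable_floor

lemma st15W_measurable : Measurable st15W := by
  unfold st15W
  have h1 : Continuous (fun t : ℝ => 4*t^3 - 5*t^2 + 4*t + 1) := by continuity
  have h2 : Continuous (fun t : ℝ => t^2 * (t+1)^4) := by continuity
  exact h1.measurable.div h2.measurable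

noncomputable def st15S (n : ℕ) : ℝ → ℝ :=
  Set.indicator (Set.Ici (n:ℝ)) (fun t => st15c n * st15W t)

lemma st15S_nonneg (n : ℕ) (t : ℝ) : 0 ≤ st15S n t := by
  unfold st15S
  apply Set.indicator_nonneg
  intro x hx
  have : (0:ℝ) ≤ x := le_trans (Nat.cast_nonneg n) hx
  exact mul_nonneg (st15c_nonneg n) (st15W_nonneg this)

lemma st15S_integrable (n : ℕ) : IntegrableOn (st15S n) (Set.Ioi 1) := by
  by_cases hp : n.Prime
  · have hn1 : (1:ℝ) ≤ (n:ℝ) := by exact_mod_cast hp.one_lt.le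
    have hg : IntegrableOn (fun t => st15c n * st15W t) (Set.Ici (n:ℝ)) := by
      rw [integrableOn_Ici_iff_integrableOn_Ioi]
      exact ((st15_int_W hn1).1).const_mul _
    exact (hg.integrable_indicator measurableSet_Ici).integrableOn
  · have : st15S n = fun _ => 0 := by
      funext t
      simp [st15S, st15c, hp]
    rw [this]
    exact (integrableOn_const_iff (C := (0:ℝ))).mpr (Or.inl (by simp))

lemma st15S_integral {n : ℕ} (hp : n.Prime) :
    ∫ t in Set.Ioi (1:ℝ), st15S n t = st15c n * st15f n := by
  have hn1 : (1:ℝ) ≤ (n:ℝ) := by exact_mod_cast hp.one_lt.le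
  have h2 : (2:ℝ) ≤ (n:ℝ) := by exact_mod_cast hp.two_le
  unfold st15S
  rw [MeasureTheory.integral_indicator measurableSet_Ici,
    Measure.restrict_restrict measurableSet_Ici]
  have hsub : Set.Ici (n:ℝ) ∩ Set.Ioi 1 = Set.Ici (n:ℝ) := by
    apply Set.inter_eq_left.mpr
    intro x hx
    have : (n:ℝ) ≤ x := hx
    exact lt_of_lt_of_le (by linarith) this
  rw [hsub, MeasureTheory.integral_Ici_eq_integral_Ioi, MeasureTheory.integral_const_mul,
    (st15_int_W hn1).2]

lemma st15_sum_range (t : ℝ) (ht : t ∈ Set.Ioi (1:ℝ)) :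
    ∑ n ∈ Finset.range (Nat.floor t + 1), st15S n t = chebTheta t * st15W t := by
  have ht0 : (0:ℝ) ≤ t := by have := ht.out; linarith
  have : ∀ n ∈ Finset.range (Nat.floor t + 1), st15S n t = st15c n * st15W t := by
    intro n hn
    have hn' : n ≤ Nat.floor t := Nat.lt_succ_iff.mp (Finset.mem_range.mp hn)
    have : (n:ℝ) ≤ t := le_trans (by exact_mod_cast hn') (Nat.floor_le ht0)
    exact Set.indicator_of_mem this _
  rw [Finset.sum_congr rfl this, ← Finset.sum_mul, ← chebTheta_eq]

lemma st15_tsum_S (t : ℝ) (ht : t ∈ Set.Ioi (1:ℝ)) :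
    ∑' n, st15S n t = chebTheta t * st15W t := by
  rw [tsum_eq_sum (s := Finset.range (Nat.floor t + 1)), st15_sum_range t ht]
  intro n hn
  have hn' : Nat.floor t < n := by
    by_contra h
    exact hn (Finset.mem_range.mpr (Nat.lt_succ_iff.mpr (not_lt.mp h)))
  apply Set.indicator_of_notMem
  intro hmem
  exact absurd (Nat.le_floor hmem) (not_le.mpr hn')

lemma st15_thetaW_integrable :
    IntegrableOn (fun t => chebTheta t * st15W t) (Set.Ioi 1) := by
  apply Integrable.mono' ((st15_int_tW.1).const_mul (Real.log 4))
  · exact (chebTheta_measurable.mul st15W_measurable).aestronglyMeasurable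
  · rw [ae_restrict_iff' measurableSet_Ioi]
    apply ae_of_all
    intro t ht
    have ht1 : (1:ℝ) < t := ht
    have ht0 : (0:ℝ) ≤ t := by linarith
    have hW : 0 ≤ st15W t := st15W_nonneg ht0
    rw [Real.norm_of_nonneg (mul_nonneg (chebTheta_nonneg t) hW)]
    calc chebTheta t * st15W t ≤ (Real.log 4 * t) * st15W t :=
          mul_le_mul_of_nonneg_right (chebTheta_le ht0) hW
      _ = Real.log 4 * (t * st15W t) := by ring

lemma st15S_zero {n : ℕ} {t : ℝ} (hn : Nat.floor t < n) : st15S n t = 0 := by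
  apply Set.indicator_of_notMem
  intro hmem
  exact absurd (Nat.le_floor hmem) (not_le.mpr hn)

lemma st15_summable_T : Summable (fun n => ∫ t in Set.Ioi (1:ℝ), st15S n t) := by
  apply summable_of_sum_le (c := ∫ t in Set.Ioi (1:ℝ), chebTheta t * st15W t)
  · intro n
    exact setIntegral_nonneg measurableSet_Ioi (fun t _ => st15S_nonneg n t)
  · intro F
    rw [← MeasureTheory.integral_finset_sum F (fun n _ => st15S_integrable n)]
    apply setIntegral_mono_on (integrable_finset_sum F fun n _ => st15S_integrable n)
      st15_thetaW_integrable measurableSet_Ioi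
    intro t ht
    calc ∑ n ∈ F, st15S n t
        ≤ ∑ n ∈ F ∪ Finset.range (Nat.floor t + 1), st15S n t :=
          Finset.sum_le_sum_of_subset_of_nonneg
            Finset.subset_union_left (fun n _ _ => st15S_nonneg n t)
      _ = ∑ n ∈ Finset.range (Nat.floor t + 1), st15S n t := by
          symm
          apply Finset.sum_subset Finset.subset_union_right
          intro n _ hnr
          apply st15S_zero
          by_contra h
          exact hnr (Finset.mem_range.mpr (Nat.lt_succ_iff.mpr (not_lt.mp h)))
      _ = chebTheta t * st15W t := st15_sum_range t ht

lemma st15_swap : ∑' n, (∫ t in Set.Ioi (1:ℝ), st15S n t)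
    = ∫ t in Set.Ioi (1:ℝ), chebTheta t * st15W t := by
  have hnorm : ∀ n : ℕ, ∫ t in Set.Ioi (1:ℝ), ‖st15S n t‖ = ∫ t in Set.Ioi (1:ℝ), st15S n t :=
    fun n => setIntegral_congr_fun measurableSet_Ioi
      (fun t _ => Real.norm_of_nonneg (st15S_nonneg n t))
  have hsum : Summable fun n : ℕ => ∫ t in Set.Ioi (1:ℝ), ‖st15S n t‖ := by
    apply Summable.congr st15_summable_T
    intro n
    exact (hnorm n).symm
  have h := MeasureTheory.integral_tsum_of_summable_integral_norm
    (μ := volume.restrict (Set.Ioi 1)) (F := st15S) (fun n => st15S_integrable n) hsum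
  rw [h]
  exact setIntegral_congr_fun measurableSet_Ioi (fun t ht => st15_tsum_S t ht)

lemma st15T_eq (n : ℕ) : ∫ t in Set.Ioi (1:ℝ), st15S n t = st15c n * st15f n := by
  by_cases hp : n.Prime
  · exact st15S_integral hp
  · have : st15S n = fun _ => 0 := by funext t; simp [st15S, st15c, hp]
    rw [this]
    simp [st15c, hp]

theorem stmt15 :
    Summable (fun p : ℕ => if Nat.Prime p then
        Real.log p * (2*(p:ℝ)^2 - (p:ℝ) + 1) / ((p:ℝ) * ((p:ℝ) + 1)^3) else 0) ∧
    IntegrableOn (fun t : ℝ => chebE t * (4*t^3 - 5*t^2 + 4*t + 1) / (t^2 * (t+1)^4))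
      (Set.Ioi 1) ∧
    (∑' p : ℕ, if Nat.Prime p then
        Real.log p * (2*(p:ℝ)^2 - (p:ℝ) + 1) / ((p:ℝ) * ((p:ℝ) + 1)^3) else 0)
      = 1/4 + Real.log 2
        + ∫ t in Set.Ioi (1:ℝ), chebE t * (4*t^3 - 5*t^2 + 4*t + 1) / (t^2 * (t+1)^4) := by
  have hterm : (fun p : ℕ => if Nat.Prime p then
      Real.log p * (2*(p:ℝ)^2 - (p:ℝ) + 1) / ((p:ℝ) * ((p:ℝ) + 1)^3) else 0)
      = fun n => ∫ t in Set.Ioi (1:ℝ), st15S n t := by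
    funext n
    rw [st15T_eq]
    by_cases hp : n.Prime
    · simp only [if_pos hp, st15c, st15f, mul_div_assoc]
    · simp [st15c, hp]
  have hform : (fun t : ℝ => chebE t * (4*t^3 - 5*t^2 + 4*t + 1) / (t^2 * (t+1)^4))
      = fun t => chebE t * st15W t := by
    funext t
    rw [st15W, mul_div_assoc]
  have hIEW : IntegrableOn (fun t => chebE t * st15W t) (Set.Ioi 1) := by
    have h := st15_thetaW_integrable.sub st15_int_tW.1
    have heq : (fun t => chebTheta t * st15W t - t * st15W t)
        = fun t => chebE t * st15W t := by
      funext t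
      rw [chebE, sub_mul]
    exact heq ▸ h
  refine ⟨?_, ?_, ?_⟩
  · rw [hterm]; exact st15_summable_T
  · rw [hform]; exact hIEW
  · rw [hterm, hform, st15_swap]
    have hsplit : (fun t : ℝ => chebTheta t * st15W t)
        = fun t => t * st15W t + chebE t * st15W t := by
      funext t
      rw [chebE]; ring
    rw [hsplit, MeasureTheory.integral_add st15_int_tW.1 hIEW, st15_int_tW.2]
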